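/- Let π = ℤ × ℤ/2 with generators α = (1,0) and β = (0,1), and let φ: π → π be the endomorphism defined by φ(α) = 1 and φ(β) = β. Then GR(φ) = 1, while the restriction of φ to the finite-index subgroup ℤ × {0} has GR(φ|_{ℤ×{0}}) = 0, and the restriction of φ to the subgroup {0} × ℤ/2 has GR(φ|_{{0}×ℤ/2}) = 1. In particular, the growth rate of the restriction of an endomorphism to an invariant finite-index subgroup can be strictly smaller than the growth rate of the endomorphism. -/

import Mathlib

/-! The endomorphism `φ` kills the `ℤ` factor and fixes the `ℤ/2` factor, so it is idempotent,
and so are its restrictions: the trivial map on `ℤ × {0}` and the identity on `{0} × ℤ/2`.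
For an idempotent map `L_k` does not depend on `k ≥ 1`, so the growth rate is `inf_k C^{1/k}`
for a constant `C`; this is `1` when `C ≥ 1`, which holds as soon as some generator is not
sent to `1`, and `0` when `C = 0`. -/

open Filter Topology

/-- Word length of `g` with respect to the (symmetrized) generating set `S`. -/
noncomputable def wordLength {G : Type*} [Group G] (S : Set G) (g : G) : ℕ :=
  sInf {n : ℕ | ∃ w : List G, w.length = n ∧ (∀ x ∈ w, x ∈ S ∨ x⁻¹ ∈ S) ∧ w.prod = g}

/-- `L_k(f, S) = max_{s ∈ S} L(f^k(s), S)`. -/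
noncomputable def Lk {G : Type*} [Group G] (S : Finset G) (f : G → G) (k : ℕ) : ℕ :=
  S.sup fun s => wordLength (S : Set G) (f^[k] s)

/-- The growth rate `GR(f) = inf_{k ≥ 1} L_k(f,S)^{1/k}` (which equals
`lim_{k→∞} L_k(f,S)^{1/k}`). -/
noncomputable def GR {G : Type*} [Group G] (S : Finset G) (f : G → G) : ℝ :=
  ⨅ k : ℕ+, (Lk S f k : ℝ) ^ (((k : ℕ) : ℝ))⁻¹

/-- `f` is eventually trivial if some iterate is the trivial endomorphism. -/
def EventuallyTrivial {G : Type*} [Group G] (f : G → G) : Prop :=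
  ∃ N : ℕ, 0 < N ∧ ∀ g, f^[N] g = 1

lemma Function.iterate_apply_eq_of_idempotent {α : Type*} {f : α → α} (hf : ∀ x, f (f x) = f x)
    {k : ℕ} (hk : k ≠ 0) (x : α) : f^[k] x = f x := by
  obtain ⟨n, rfl⟩ := Nat.exists_eq_succ_of_ne_zero hk
  exact (Function.iterate_succ_apply f n x).trans (Function.iterate_fixed (hf x) n)

lemma iInf_rpow_inv_eq_one {C : ℝ} (hC : 1 ≤ C) : ⨅ k : ℕ+, C ^ ((k : ℕ) : ℝ)⁻¹ = 1 := by
  have hle : ∀ k : ℕ+, 1 ≤ C ^ ((k : ℕ) : ℝ)⁻¹ := fun k => Real.one_le_rpow hC (by positivity)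
  refine le_antisymm ?_ (le_ciInf hle)
  have hlim : Tendsto (fun k : ℕ => C ^ (k : ℝ)⁻¹) atTop (𝓝 1) := by
    have h := (Real.continuousAt_const_rpow (by positivity : C ≠ 0)).tendsto.comp
      (tendsto_inv_atTop_zero.comp tendsto_natCast_atTop_atTop)
    rwa [Real.rpow_zero] at h
  refine ge_of_tendsto hlim (eventually_atTop.mpr ⟨1, fun k hk => ?_⟩)
  exact ciInf_le ⟨1, Set.forall_mem_range.mpr hle⟩ ⟨k, hk⟩

section GrowthRate

variable {G : Type*} [Group G]

lemma wordLength_one (S : Set G) : wordLength S 1 = 0 :=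
  Nat.sInf_eq_zero.mpr (Or.inl ⟨[], rfl, by simp, rfl⟩)

lemma wordLength_ne_zero {S : Set G} {g : G} (hg : g ∈ Subgroup.closure S) (hne : g ≠ 1) :
    wordLength S g ≠ 0 := by
  obtain ⟨w, hw, rfl⟩ := Submonoid.exists_list_of_mem_closure
    (s := S ∪ S⁻¹) (by rwa [← Subgroup.closure_toSubmonoid])
  rw [wordLength, Ne, Nat.sInf_eq_zero, not_or, Set.eq_empty_iff_forall_notMem]
  refine ⟨?_, fun h => h _ ⟨w, rfl, hw, rfl⟩⟩
  rintro ⟨v, hv, -, hvw⟩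
  rw [List.length_eq_zero_iff.mp hv] at hvw
  exact hne hvw.symm

lemma MonoidHom.exists_mem_apply_ne_one {S : Set G} (hS : Subgroup.closure S = ⊤)
    {f : G →* G} (hf : f ≠ 1) : ∃ s ∈ S, f s ≠ 1 := by
  by_contra! h
  exact hf (MonoidHom.eq_of_eqOn_dense hS h)

lemma GR_eq_one_of_idempotent {S : Finset G} (hS : Subgroup.closure (S : Set G) = ⊤)
    (f : G →* G) (hidem : ∀ x, f (f x) = f x) (hf : f ≠ 1) : GR S f = 1 := by
  obtain ⟨s, hsS, hs⟩ := f.exists_mem_apply_ne_one hS hf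
  have hLk : ∀ k : ℕ+, Lk S f k = Lk S f 1 := fun k => by
    simp only [Lk, Function.iterate_apply_eq_of_idempotent hidem k.ne_zero, Function.iterate_one]
  have hpos : 1 ≤ Lk S f 1 :=
    (Nat.one_le_iff_ne_zero.mpr (wordLength_ne_zero (hS ▸ Subgroup.mem_top (f s)) hs)).trans
      (Finset.le_sup (f := fun s => wordLength (S : Set G) (f^[1] s)) hsS)
  simp only [GR, hLk]
  exact iInf_rpow_inv_eq_one (by exact_mod_cast hpos)

lemma GR_const_one (S : Finset G) : GR S (fun _ => 1) = 0 := by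
  have hLk : ∀ k : ℕ+, Lk S (fun _ => 1) k = 0 := fun k => by
    simp [Lk, Function.iterate_apply_eq_of_idempotent (f := fun _ : G => 1) (fun _ => rfl)
      k.ne_zero, wordLength_one]
  simp [GR, hLk]

end GrowthRate

lemma AddSubgroup.finiteIndex_toSubgroup_top_prod_bot (A B : Type*) [AddGroup A] [AddGroup B]
    [Finite B] :
    (AddSubgroup.toSubgroup ((⊤ : AddSubgroup A).prod (⊥ : AddSubgroup B))).FiniteIndex := by
  simp [AddSubgroup.finiteIndex_iff, AddSubgroup.index_prod, Nat.card_pos.ne']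

lemma Multiplicative.mem_toSubgroup_prod {A B : Type*} [AddGroup A] [AddGroup B]
    {H : AddSubgroup A} {K : AddSubgroup B} {x : Multiplicative (A × B)} :
    x ∈ AddSubgroup.toSubgroup (H.prod K) ↔ x.toAdd.1 ∈ H ∧ x.toAdd.2 ∈ K :=
  AddSubgroup.mem_prod

lemma MonoidHom.apply_eq_ofAdd_zero_snd
    (φ : Multiplicative (ℤ × ZMod 2) →* Multiplicative (ℤ × ZMod 2))
    (hα : φ (Multiplicative.ofAdd ((1 : ℤ), (0 : ZMod 2))) = 1)
    (hβ : φ (Multiplicative.ofAdd ((0 : ℤ), (1 : ZMod 2))) =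
      Multiplicative.ofAdd ((0 : ℤ), (1 : ZMod 2)))
    (x : Multiplicative (ℤ × ZMod 2)) : φ x = Multiplicative.ofAdd (0, x.toAdd.2) := by
  have hsnd : ∀ b : ZMod 2, φ (Multiplicative.ofAdd (0, b)) = Multiplicative.ofAdd (0, b) := by
    intro b
    fin_cases b
    exacts [φ.map_one, hβ]
  calc φ x = φ (Multiplicative.ofAdd ((1 : ℤ), (0 : ZMod 2)) ^ x.toAdd.1 *
        Multiplicative.ofAdd (0, x.toAdd.2)) := by
        congr 1
        apply Multiplicative.toAdd.injective
        simp
    _ = _ := by rw [map_mul, map_zpow, hα, one_zpow, one_mul, hsnd]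

/-- For `π = ℤ × ℤ/2` with generators `α = (1,0)`, `β = (0,1)` and the
endomorphism `φ` with `φ(α) = 1`, `φ(β) = β`: `GR(φ) = 1`, while `GR(φ|_{ℤ×{0}}) = 0`
(a finite-index invariant subgroup, showing the restricted growth rate can be strictly
smaller) and `GR(φ|_{{0}×ℤ/2}) = 1`. -/
theorem GR_int_prod_zmod2 (φ : Multiplicative (ℤ × ZMod 2) →* Multiplicative (ℤ × ZMod 2))
    (hα : φ (Multiplicative.ofAdd ((1 : ℤ), (0 : ZMod 2))) = 1)
    (hβ : φ (Multiplicative.ofAdd ((0 : ℤ), (1 : ZMod 2))) =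
      Multiplicative.ofAdd ((0 : ℤ), (1 : ZMod 2))) :
    (∀ S : Finset (Multiplicative (ℤ × ZMod 2)),
      Subgroup.closure (S : Set (Multiplicative (ℤ × ZMod 2))) = ⊤ →
      GR S ⇑φ = 1 ∧
      (∀ N1 : Subgroup (Multiplicative (ℤ × ZMod 2)),
        N1 = AddSubgroup.toSubgroup ((⊤ : AddSubgroup ℤ).prod (⊥ : AddSubgroup (ZMod 2))) →
        N1.FiniteIndex ∧ (∀ g ∈ N1, φ g ∈ N1) ∧
        (∀ f1 : N1 → N1, (∀ x : N1, (f1 x : Multiplicative (ℤ × ZMod 2)) = φ x) →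
          ∀ S1 : Finset N1, Subgroup.closure (S1 : Set N1) = ⊤ →
            GR S1 f1 = 0 ∧ GR S1 f1 < GR S ⇑φ)) ∧
      (∀ N2 : Subgroup (Multiplicative (ℤ × ZMod 2)),
        N2 = AddSubgroup.toSubgroup ((⊥ : AddSubgroup ℤ).prod (⊤ : AddSubgroup (ZMod 2))) →
        (∀ g ∈ N2, φ g ∈ N2) ∧
        (∀ f2 : N2 → N2, (∀ x : N2, (f2 x : Multiplicative (ℤ × ZMod 2)) = φ x) →
          ∀ S2 : Finset N2, Subgroup.closure (S2 : Set N2) = ⊤ →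
            GR S2 f2 = 1))) := by
  intro S hS
  have hφ := φ.apply_eq_ofAdd_zero_snd hα hβ
  have hβ1 : Multiplicative.ofAdd ((0 : ℤ), (1 : ZMod 2)) ≠ 1 := by decide
  have hGR : GR S φ = 1 :=
    GR_eq_one_of_idempotent hS φ (fun x => by simp [hφ]) fun h => hβ1 (hβ ▸ DFunLike.congr_fun h _)
  refine ⟨hGR, ?_, ?_⟩
  · rintro N1 rfl
    have hker : ∀ g ∈ AddSubgroup.toSubgroup ((⊤ : AddSubgroup ℤ).prod (⊥ : AddSubgroup (ZMod 2))),
        φ g = 1 := fun g hg => by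
      rw [hφ, AddSubgroup.mem_bot.mp (Multiplicative.mem_toSubgroup_prod.mp hg).2]; rfl
    refine ⟨AddSubgroup.finiteIndex_toSubgroup_top_prod_bot ℤ (ZMod 2),
      fun g hg => hker g hg ▸ one_mem _, fun f1 hf1 S1 _ => ?_⟩
    obtain rfl : f1 = fun _ => 1 := funext fun x => Subtype.ext ((hf1 x).trans (hker x x.2))
    rw [GR_const_one, hGR]
    exact ⟨rfl, one_pos⟩
  · rintro N2 rfl
    have hfix : ∀ g ∈ AddSubgroup.toSubgroup ((⊥ : AddSubgroup ℤ).prod (⊤ : AddSubgroup (ZMod 2))),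
        φ g = g := fun g hg => by
      rw [hφ, ← AddSubgroup.mem_bot.mp (Multiplicative.mem_toSubgroup_prod.mp hg).1]; rfl
    refine ⟨fun g hg => (hfix g hg).symm ▸ hg, fun f2 hf2 S2 hS2 => ?_⟩
    obtain rfl : f2 = MonoidHom.id _ := funext fun x => Subtype.ext ((hf2 x).trans (hfix x x.2))
    exact GR_eq_one_of_idempotent hS2 _ (fun _ => rfl)
      fun h => hβ1 (congrArg Subtype.val (DFunLike.congr_fun h ⟨_, by simp [AddSubgroup.mem_prod]⟩))
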